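/- Let h ∈ L²(ℝ) satisfy h(x) = 0 for almost every x ∉ [a,b], where a ≤ 0 < b are integers. Let j, m ∈ ℕ be such that 0 ≤ a + m and b + m ≤ 2^j (so that the support of h_{j,m}(x) := 2^{j/2} h(2^j x − m) is contained in [0,1]). Then for every n ∈ ℕ: ∫₀¹ h_{j,m}(x) w_n(x) dx = 2^{−j/2} Σ_{l=a}^{b−1} w_n((l+m)/2^j) · ∫₀¹ h(x+l) w_{⌊n/2^j⌋}(x) dx. -/

import Mathlib

open MeasureTheory

/-- `natDigit n i` is the `i`-th binary digit `n^(i)` (for `i ≥ 1`) of `n ∈ ℕ`,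
so that `n = Σ_{i ≥ 1} n^(i) 2^(i-1)`. -/
def natDigit (n i : ℕ) : ℕ := (n / 2 ^ (i - 1)) % 2

/-- `dyadicDigit x i` is the `i`-th dyadic digit `x^(i) = ⌊2^i x⌋ − 2⌊2^(i−1) x⌋`
(for `i ≥ 1`) of `x ∈ [0,1)`. -/
noncomputable def dyadicDigit (x : ℝ) (i : ℕ) : ℤ :=
  ⌊(2 : ℝ) ^ i * x⌋ - 2 * ⌊(2 : ℝ) ^ (i - 1) * x⌋

/-- The sequency-ordered Walsh function
`w_n(x) = (−1)^{Σ_{i≥1} (n^(i) + n^(i+1)) x^(i)}`; the sum is finite since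
`n^(i) = 0` for `i > n`, so it may be truncated at `i = n + 1`. -/
noncomputable def walsh (n : ℕ) (x : ℝ) : ℝ :=
  (-1 : ℝ) ^ ∑ i ∈ Finset.Icc 1 (n + 1),
    (natDigit n i + natDigit n (i + 1)) * (dyadicDigit x i).toNat

/-- The dyadic XOR `x ⊕ y := Σ_{i≥1} |x^(i) − y^(i)| 2^{−i}` of `x, y ∈ [0,1)`. -/
noncomputable def dyadicXor (x y : ℝ) : ℝ :=
  ∑' i : ℕ, |(dyadicDigit x (i + 1) : ℝ) - (dyadicDigit y (i + 1) : ℝ)| / 2 ^ (i + 1)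

/-!
Substituting `u = 2^j x − m` turns the left side into
`2^{−j/2} ∫_{−m}^{2^j−m} h(u) w_n((u+m)/2^j) du`. Split this integral into the unit intervals
`[l, l+1]`; only those with `a ≤ l ≤ b − 1` meet the support of `h`. On `[l, l+1)` the Walsh
factor is self-similar: `w_n((t+k)/2^j) = w_n(k/2^j) · w_{⌊n/2^j⌋}(t)` for `k = l + m` and
`t ∈ [0,1)`, because the first `j` dyadic digits of `(t+k)/2^j` are those of `k/2^j`, its later
digits are those of `t`, and the binary digits of `n` beyond the `j`-th are those of `⌊n/2^j⌋`.
-/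

lemma natDigit_eq_zero_of_lt {n i : ℕ} (h : n < i) : natDigit n i = 0 := by
  have : n < 2 ^ (i - 1) :=
    (Nat.lt_two_pow_self).trans_le (Nat.pow_le_pow_right two_pos (by omega))
  simp [natDigit, Nat.div_eq_of_lt this]

lemma natDigit_div_two_pow (n j s : ℕ) : natDigit (n / 2 ^ j) (s + 1) = natDigit n (j + s + 1) := by
  simp [natDigit, Nat.div_div_eq_div_mul, ← pow_add]

lemma dyadicDigit_zero (i : ℕ) : dyadicDigit 0 i = 0 := by
  simp [dyadicDigit]

lemma dyadicDigit_add_intCast (x : ℝ) (k : ℤ) (s : ℕ) :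
    dyadicDigit (x + k) (s + 1) = dyadicDigit x (s + 1) := by
  have hcast : ∀ e : ℕ, (2 : ℝ) ^ e * (x + k) = 2 ^ e * x + ((2 ^ e * k : ℤ) : ℝ) := by
    intro e; push_cast; ring
  simp only [dyadicDigit, Nat.add_sub_cancel, hcast, Int.floor_add_intCast]
  ring

lemma dyadicDigit_div_two_pow (x : ℝ) (j s : ℕ) :
    dyadicDigit (x / 2 ^ j) (j + s + 1) = dyadicDigit x (s + 1) := by
  have hscale : ∀ e : ℕ, (2 : ℝ) ^ (j + e) * (x / 2 ^ j) = 2 ^ e * x := by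
    intro e; rw [pow_add]; field_simp
  rw [dyadicDigit, dyadicDigit, add_assoc, hscale, Nat.add_sub_cancel, ← add_assoc,
    Nat.add_sub_cancel, hscale]

lemma floor_two_pow_mul_div_two_pow (x : ℝ) {i j : ℕ} (hij : i ≤ j) :
    ⌊(2 : ℝ) ^ i * (x / 2 ^ j)⌋ = ⌊x⌋ / 2 ^ (j - i) := by
  have hscale : (2 : ℝ) ^ i * (x / 2 ^ j) = x / ((2 ^ (j - i) : ℕ) : ℝ) := by
    obtain ⟨d, rfl⟩ := Nat.exists_eq_add_of_le hij
    rw [Nat.add_sub_cancel_left, pow_add]; push_cast; field_simp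
  rw [hscale, Int.floor_div_natCast]
  push_cast; rfl

lemma dyadicDigit_div_two_pow_of_le (x : ℝ) {i j : ℕ} (hij : i ≤ j) :
    dyadicDigit (x / 2 ^ j) i = dyadicDigit (⌊x⌋ / 2 ^ j) i := by
  simp only [dyadicDigit, floor_two_pow_mul_div_two_pow _ hij,
    floor_two_pow_mul_div_two_pow _ ((Nat.sub_le i 1).trans hij), Int.floor_intCast]

noncomputable def walshExponentTerm (n : ℕ) (x : ℝ) (i : ℕ) : ℕ :=
  (natDigit n (i + 1) + natDigit n (i + 2)) * (dyadicDigit x (i + 1)).toNat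

open Finset in
lemma walsh_eq_neg_one_pow_sum (n : ℕ) (x : ℝ) {N : ℕ} (hN : n + 1 ≤ N) :
    walsh n x = (-1) ^ ∑ i ∈ range N, walshExponentTerm n x i := by
  rw [walsh, ← Ico_add_one_right_eq_Icc, sum_Ico_eq_sum_range, Nat.add_sub_cancel]
  congr 1
  refine (sum_congr rfl fun i _ => by rw [add_comm 1 i, add_assoc]; rfl).trans
    (sum_subset (range_subset_range.2 hN) fun i _ hi => ?_)
  rw [mem_range, not_lt] at hi
  simp [walshExponentTerm, natDigit_eq_zero_of_lt (show n < i + 1 by omega),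
    natDigit_eq_zero_of_lt (show n < i + 2 by omega)]

open Finset in
theorem walsh_add_intCast_div_two_pow (n j : ℕ) (k : ℤ) {t : ℝ} (ht0 : 0 ≤ t) (ht1 : t < 1) :
    walsh n ((t + k) / 2 ^ j) = walsh n (k / 2 ^ j) * walsh (n / 2 ^ j) t := by
  have hfloor : ⌊t + k⌋ = k := by
    rw [Int.floor_add_intCast, Int.floor_eq_zero_iff.2 ⟨ht0, ht1⟩, zero_add]
  have hlow : ∑ i ∈ range j, walshExponentTerm n ((t + k) / 2 ^ j) i =
      ∑ i ∈ range j, walshExponentTerm n (k / 2 ^ j) i :=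
    sum_congr rfl fun i hi => by
      have hij : i + 1 ≤ j := mem_range.1 hi
      rw [walshExponentTerm, walshExponentTerm, dyadicDigit_div_two_pow_of_le _ hij,
        dyadicDigit_div_two_pow_of_le _ hij, hfloor, Int.floor_intCast]
  have hhigh : ∑ i ∈ range (n + 1), walshExponentTerm n ((t + k) / 2 ^ j) (j + i) =
      ∑ i ∈ range (n + 1), walshExponentTerm (n / 2 ^ j) t i :=
    sum_congr rfl fun i _ => by
      simp only [walshExponentTerm, natDigit_div_two_pow, dyadicDigit_div_two_pow,
        dyadicDigit_add_intCast, ← add_assoc]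
  have hzero : ∑ i ∈ range (n + 1), walshExponentTerm n (k / 2 ^ j) (j + i) = 0 :=
    sum_eq_zero fun i _ => by
      rw [walshExponentTerm, ← zero_add (k : ℝ), dyadicDigit_div_two_pow,
        dyadicDigit_add_intCast, dyadicDigit_zero, Int.toNat_zero, mul_zero]
  rw [walsh_eq_neg_one_pow_sum n _ (N := j + (n + 1)) (by omega),
    walsh_eq_neg_one_pow_sum n _ (N := j + (n + 1)) (by omega),
    walsh_eq_neg_one_pow_sum (n / 2 ^ j) t (N := n + 1) (Nat.succ_le_succ (Nat.div_le_self _ _)),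
    sum_range_add _ j (n + 1), sum_range_add _ j (n + 1), hlow, hhigh, hzero, add_zero,
    pow_add]

lemma measurable_walsh (n : ℕ) : Measurable (walsh n) := by
  unfold walsh dyadicDigit
  measurability

lemma abs_walsh (n : ℕ) (x : ℝ) : |walsh n x| = 1 := by
  rw [walsh, abs_pow, abs_neg, abs_one, one_pow]

lemma IntervalIntegrable.mul_walsh_comp {μ : Measure ℝ} {f φ : ℝ → ℝ} {c d : ℝ}
    (hf : IntervalIntegrable f μ c d) (n : ℕ) (hφ : Measurable φ) :
    IntervalIntegrable (fun u => f u * walsh n (φ u)) μ c d := by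
  refine hf.norm.mono_fun' (hf.aestronglyMeasurable_restrict_uIoc.mul ?_) (ae_of_all _ fun u => ?_)
  · exact ((measurable_walsh n).comp hφ).aestronglyMeasurable
  · simp [abs_walsh]

open Finset in
lemma intervalIntegral_eq_sum_Ico_int {E : Type*} [NormedAddCommGroup E] [NormedSpace ℝ E]
    {μ : Measure ℝ} {f : ℝ → E} {p q : ℤ} (hpq : p ≤ q) (hf : IntervalIntegrable f μ p q) :
    ∫ x in (p : ℝ)..q, f x ∂μ = ∑ l ∈ Ico p q, ∫ x in (l : ℝ)..(l + 1), f x ∂μ := by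
  induction q, hpq using Int.leInduction with
  | base => simp
  | succ q hpq ih =>
    push_cast at hf ⊢
    have hmem : (q : ℝ) ∈ Set.uIcc (p : ℝ) (q + 1) :=
      Set.mem_uIcc.2 (Or.inl ⟨by exact_mod_cast hpq, by linarith⟩)
    have hpq' := hf.mono_set (Set.uIcc_subset_uIcc_left hmem)
    rw [← insert_Ico_right_eq_Ico_add_one hpq, sum_insert right_notMem_Ico,
      ← intervalIntegral.integral_add_adjacent_intervals hpq'
        (hf.mono_set (Set.uIcc_subset_uIcc_right hmem)), ih hpq', add_comm]

lemma intervalIntegral_add_one_eq_zero_of_notMem_Icc {E : Type*} [NormedAddCommGroup E]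
    [NormedSpace ℝ E] {f : ℝ → E} {a b l : ℤ} (hf : ∀ᵐ x : ℝ, x ∉ Set.Icc (a : ℝ) b → f x = 0)
    (hl : l ∉ Finset.Icc a (b - 1)) : ∫ x in (l : ℝ)..(l + 1), f x = 0 := by
  refine intervalIntegral.integral_zero_ae ?_
  filter_upwards [hf, Measure.ae_ne volume (a : ℝ)] with x hfx hxa hx
  refine hfx fun ⟨hax, hxb⟩ => hl ?_
  rw [Set.uIoc_of_le (by linarith)] at hx
  have hlb : l < b := by exact_mod_cast hx.1.trans_le hxb
  have hal : a < l + 1 := by exact_mod_cast (hax.lt_of_ne' hxa).trans_le hx.2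
  exact Finset.mem_Icc.2 ⟨by omega, by omega⟩

lemma intervalIntegral_comp_mul_sub_mul_walsh (f : ℝ → ℝ) (n j : ℕ) (c : ℝ) :
    ∫ x in (0 : ℝ)..1, ((2 : ℝ) ^ ((j : ℝ) / 2) * f (2 ^ j * x - c)) * walsh n x =
      (2 : ℝ) ^ (-(j : ℝ) / 2) * ∫ u in -c..2 ^ j - c, f u * walsh n ((u + c) / 2 ^ j) := by
  have hpow : (2 : ℝ) ^ ((j : ℝ) / 2) * ((2 : ℝ) ^ j)⁻¹ = (2 : ℝ) ^ (-(j : ℝ) / 2) := by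
    rw [← Real.rpow_natCast, ← Real.rpow_neg zero_le_two, ← Real.rpow_add two_pos]
    ring_nf
  set F : ℝ → ℝ := fun u => f u * walsh n ((u + c) / 2 ^ j)
  have hcomp : ∀ x : ℝ, (2 : ℝ) ^ ((j : ℝ) / 2) * f (2 ^ j * x - c) * walsh n x =
      (2 : ℝ) ^ ((j : ℝ) / 2) * F (2 ^ j * x - c) := fun x => by
    rw [mul_assoc]
    congr 2
    rw [sub_add_cancel, mul_div_cancel_left₀ _ (by positivity)]
  rw [intervalIntegral.integral_congr fun x _ => hcomp x, intervalIntegral.integral_const_mul,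
    intervalIntegral.integral_comp_mul_sub F (by positivity), smul_eq_mul, ← mul_assoc, hpow,
    mul_zero, mul_one, zero_sub]

lemma intervalIntegral_mul_walsh_comp_add_div (f : ℝ → ℝ) (n j : ℕ) (c l : ℤ) :
    ∫ u in (l : ℝ)..(l + 1), f u * walsh n ((u + c) / 2 ^ j) =
      walsh n ((l + c) / 2 ^ j) * ∫ x in (0 : ℝ)..1, f (x + l) * walsh (n / 2 ^ j) x := by
  have hshift := intervalIntegral.integral_comp_add_right (a := 0) (b := 1)
    (fun u => f u * walsh n ((u + c) / 2 ^ j)) (l : ℝ)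
  rw [zero_add, add_comm 1] at hshift
  rw [← hshift, ← intervalIntegral.integral_const_mul]
  refine intervalIntegral.integral_congr_ae ?_
  filter_upwards [Measure.ae_ne volume 1] with x hx1 hx
  rw [Set.uIoc_of_le zero_le_one] at hx
  rw [add_assoc, ← Int.cast_add, walsh_add_intCast_div_two_pow n j _ hx.1.le (hx.2.lt_of_ne hx1)]
  push_cast; ring

theorem walsh_wavelet_inner_general (a b : ℤ) (h : ℝ → ℝ)
    (hL2 : MemLp h 2 volume)
    (hsupp : ∀ᵐ x : ℝ, x ∉ Set.Icc (a : ℝ) (b : ℝ) → h x = 0)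
    (j m : ℕ) (h1 : 0 ≤ a + (m : ℤ)) (h2 : b + (m : ℤ) ≤ 2 ^ j) (n : ℕ) :
    ∫ x in (0 : ℝ)..1, ((2 : ℝ) ^ ((j : ℝ) / 2) * h (2 ^ j * x - m)) * walsh n x =
      (2 : ℝ) ^ (-(j : ℝ) / 2) * ∑ l ∈ Finset.Icc a (b - 1),
        walsh n (((l : ℝ) + m) / 2 ^ j) *
          ∫ x in (0 : ℝ)..1, h (x + l) * walsh (n / 2 ^ j) x := by
  have hh : IntervalIntegrable h volume (-m : ℤ) (2 ^ j - m : ℤ) :=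
    ((hL2.locallyIntegrable one_le_two).integrableOn_isCompact isCompact_uIcc).intervalIntegrable
  have hm : (-m : ℤ) ≤ 2 ^ j - m := by have := pow_nonneg (zero_le_two (α := ℤ)) j; omega
  have hsub : Finset.Icc a (b - 1) ⊆ Finset.Ico (-m : ℤ) (2 ^ j - m) := fun l hl => by
    simp only [Finset.mem_Icc, Finset.mem_Ico] at hl ⊢; omega
  rw [intervalIntegral_comp_mul_sub_mul_walsh,
    show -(m : ℝ) = ((-m : ℤ) : ℝ) by push_cast; rfl,
    show (2 : ℝ) ^ j - m = ((2 ^ j - m : ℤ) : ℝ) by push_cast; rfl,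
    intervalIntegral_eq_sum_Ico_int hm (hh.mul_walsh_comp n (by fun_prop)),
    ← Finset.sum_subset hsub fun l _ hl => intervalIntegral_add_one_eq_zero_of_notMem_Icc
      (hsupp.mono fun u hu hu' => by rw [hu hu', zero_mul]) hl]
  refine congrArg _ (Finset.sum_congr rfl fun l _ => ?_)
  exact_mod_cast intervalIntegral_mul_walsh_comp_add_div h n j m l

/-- For `h ∈ L²(ℝ)` supported in `[a,b]` (integers `a ≤ 0 < b`) and
`j, m ∈ ℕ` with `0 ≤ a + m` and `b + m ≤ 2^j`, one has for every `n ∈ ℕ`: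
`∫₀¹ h_{j,m}(x) w_n(x) dx
  = 2^{−j/2} Σ_{l=a}^{b−1} w_n((l+m)/2^j) ∫₀¹ h(x+l) w_{⌊n/2^j⌋}(x) dx`,
where `h_{j,m}(x) = 2^{j/2} h(2^j x − m)`. -/
theorem walsh_wavelet_inner (a b : ℤ) (ha : a ≤ 0) (hb : 0 < b) (h : ℝ → ℝ)
    (hL2 : MemLp h 2 volume)
    (hsupp : ∀ᵐ x : ℝ, x ∉ Set.Icc (a : ℝ) (b : ℝ) → h x = 0)
    (j m : ℕ) (h1 : 0 ≤ a + (m : ℤ)) (h2 : b + (m : ℤ) ≤ 2 ^ j) (n : ℕ) :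
    ∫ x in (0 : ℝ)..1, ((2 : ℝ) ^ ((j : ℝ) / 2) * h (2 ^ j * x - m)) * walsh n x =
      (2 : ℝ) ^ (-(j : ℝ) / 2) * ∑ l ∈ Finset.Icc a (b - 1),
        walsh n (((l : ℝ) + m) / 2 ^ j) *
          ∫ x in (0 : ℝ)..1, h (x + l) * walsh (n / 2 ^ j) x :=
  walsh_wavelet_inner_general a b h hL2 hsupp j m h1 h2 n
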